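/- arXiv:2603.25254 — 4 statements merged into one kernel-verified Lean document; each statement's English description precedes it below -/
import Mathlib

section
/- For all integers n ≥ 1 and k ≥ 0, define a_{n,k} = ((n-2k) * 2^(n-2k-1) / n) * C(n,k) if 0 ≤ k ≤ ⌊(n-1)/2⌋ and a_{n,k} = 0 otherwise. Then for all n ≥ 1 and k ≥ 0 with 0 ≤ k ≤ ⌊(n-1)/2⌋ - 1 (equivalently whenever all terms are in range), a_{n,k} + 4·a_{n,k+1} = 2·a_{n+1,k+1}. -/
/-- `a n k = ((n-2k)·2^(n-2k-1)/n)·C(n,k)` if `1 ≤ n` and `0 ≤ k ≤ ⌊(n-1)/2⌋`, else `0`. -/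
noncomputable def fanIKLCoeff (n k : ℕ) : ℚ :=
  if 1 ≤ n ∧ k ≤ (n - 1) / 2 then
    ((n : ℚ) - 2 * k) * 2 ^ (n - 2 * k - 1) / n * n.choose k
  else 0

theorem stmt0 (n k : ℕ) (hn : 1 ≤ n) (hk : k + 1 ≤ (n - 1) / 2) :
    fanIKLCoeff n k + 4 * fanIKLCoeff n (k + 1) = 2 * fanIKLCoeff (n + 1) (k + 1) := by
  have h3 : 2 * k + 3 ≤ n := by omega
  have c1 : 1 ≤ n ∧ k ≤ (n - 1) / 2 := ⟨hn, by omega⟩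
  have c2 : 1 ≤ n ∧ k + 1 ≤ (n - 1) / 2 := ⟨hn, hk⟩
  have c3 : 1 ≤ n + 1 ∧ k + 1 ≤ (n + 1 - 1) / 2 := ⟨by omega, by omega⟩
  simp only [fanIKLCoeff, if_pos c1, if_pos c2, if_pos c3]
  have e1 : n - 2 * k - 1 = (n - 2 * k - 3) + 2 := by omega
  have e2 : n - 2 * (k + 1) - 1 = n - 2 * k - 3 := by omega
  have e3 : n + 1 - 2 * (k + 1) - 1 = (n - 2 * k - 3) + 1 := by omega
  rw [e1, e2, e3]
  have hpas : ((n + 1).choose (k + 1) : ℚ) = n.choose k + n.choose (k + 1) := by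
    rw [Nat.choose_succ_succ]; push_cast; ring
  have hkey : ((n : ℚ) - k) * n.choose k = (k + 1) * n.choose (k + 1) := by
    have h := congrArg (fun m : ℕ => (m : ℚ)) (Nat.choose_succ_right_eq n k)
    simp only [Nat.cast_mul, Nat.cast_sub (show k ≤ n by omega)] at h
    push_cast at h
    linarith
  have hn0 : (n : ℚ) ≠ 0 := by positivity
  have hn1 : (n : ℚ) + 1 ≠ 0 := by positivity
  push_cast
  field_simp
  linear_combination (8 * (2:ℚ) ^ (n - 2 * k - 3)) * hkey -
    (4 * (2:ℚ) ^ (n - 2 * k - 3) * (n:ℚ) * ((n:ℚ) - 2 * k - 1)) * hpas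
end

section
/- For every positive integer n, the finite sequence c_{n,k} = ((n-2k)·2^(n-2k-1)/n)·C(n,k), for 0 ≤ k ≤ ⌊(n-1)/2⌋, is log-concave: c_{n,k}² ≥ c_{n,k-1}·c_{n,k+1} for all 1 ≤ k ≤ ⌊(n-1)/2⌋ - 1, and every c_{n,k} is strictly positive. -/
/-- `c n k = ((n-2k)·2^(n-2k-1)/n)·C(n,k)`, the coefficient of `t^k` in the inverse
Kazhdan–Lusztig polynomial of the fan matroid. -/
noncomputable def fanIKLc (n k : ℕ) : ℚ :=
  ((n : ℚ) - 2 * k) * 2 ^ (n - 2 * k - 1) / n * n.choose k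

/-!
Write `m = n - 2k`. In `c n (k-1) * c n (k+1)` and in `c n k ^ 2` the powers of two agree
(`2^(m+1) * 2^(m-3) = (2^(m-1))^2`) and so do the factors `1/n`, so log-concavity reduces to
`(m+2)(m-2) ≤ m^2` together with the log-concavity of the binomial coefficients.
-/

theorem Nat.choose_mul_choose_add_two_le_sq (n k : ℕ) :
    n.choose k * n.choose (k + 2) ≤ n.choose (k + 1) ^ 2 := by
  rcases lt_or_ge k n with hk | hk
  · have h₁ := Nat.choose_succ_right_eq n k
    have h₂ := Nat.choose_succ_right_eq n (k + 1)
    refine Nat.le_of_mul_le_mul_right (c := (k + 2) * (n - k)) ?_ (Nat.mul_pos (by omega) (by omega))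
    calc n.choose k * n.choose (k + 2) * ((k + 2) * (n - k))
        = n.choose (k + 2) * (k + 1 + 1) * (n.choose k * (n - k)) := by ring
      _ = n.choose (k + 1) ^ 2 * ((k + 1) * (n - (k + 1))) := by rw [h₂, ← h₁]; ring
      _ ≤ n.choose (k + 1) ^ 2 * ((k + 2) * (n - k)) := by gcongr <;> omega
  · simp [Nat.choose_eq_zero_of_lt (by omega : n < k + 2)]

theorem mul_mul_mul_le_sq {R : Type*} [CommRing R] [LinearOrder R] [IsStrictOrderedRing R]
    {a₀ a₁ a₂ b₀ b₁ b₂ : R} (ha : a₀ * a₂ ≤ a₁ ^ 2) (hb : b₀ * b₂ ≤ b₁ ^ 2)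
    (hb₀₂ : 0 ≤ b₀ * b₂) : a₀ * b₀ * (a₂ * b₂) ≤ (a₁ * b₁) ^ 2 :=
  calc a₀ * b₀ * (a₂ * b₂) = a₀ * a₂ * (b₀ * b₂) := by ring
    _ ≤ a₁ ^ 2 * b₁ ^ 2 := mul_le_mul ha hb hb₀₂ (sq_nonneg a₁)
    _ = (a₁ * b₁) ^ 2 := (mul_pow a₁ b₁ 2).symm

theorem fanIKLc_pos {n k : ℕ} (hk : 2 * k < n) : 0 < fanIKLc n k := by
  have hlin : (0 : ℚ) < n - 2 * k := sub_pos.2 (by exact_mod_cast hk)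
  have hchoose : (0 : ℚ) < n.choose k := by exact_mod_cast Nat.choose_pos (by omega)
  have hn : (0 : ℚ) < n := by exact_mod_cast (by omega : 0 < n)
  unfold fanIKLc
  positivity

theorem fanIKLc_mul_le_sq {n k : ℕ} (hk : 1 ≤ k) (hkn : 2 * k + 3 ≤ n) :
    fanIKLc n (k - 1) * fanIKLc n (k + 1) ≤ fanIKLc n k ^ 2 := by
  have hpow : (2 : ℚ) ^ (n - 2 * (k - 1) - 1) * 2 ^ (n - 2 * (k + 1) - 1)
      = (2 ^ (n - 2 * k - 1)) ^ 2 := by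
    rw [← pow_add, ← pow_mul]
    congr 1
    omega
  have hlin : ((n : ℚ) - 2 * ↑(k - 1)) * (n - 2 * ↑(k + 1)) ≤ (n - 2 * k) ^ 2 := by
    push_cast [Nat.cast_sub hk]
    nlinarith
  have hchoose : (n.choose (k - 1) : ℚ) * n.choose (k + 1) ≤ (n.choose k : ℚ) ^ 2 := by
    obtain ⟨j, rfl⟩ := Nat.exists_eq_add_of_le' hk
    exact_mod_cast Nat.choose_mul_choose_add_two_le_sq n j
  calc fanIKLc n (k - 1) * fanIKLc n (k + 1)
      = ((n : ℚ) - 2 * ↑(k - 1)) * n.choose (k - 1) * ((n - 2 * ↑(k + 1)) * n.choose (k + 1))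
          * (2 ^ (n - 2 * k - 1) / n) ^ 2 := by
        unfold fanIKLc
        rw [div_pow, ← hpow]
        ring
    _ ≤ ((n - 2 * k) * n.choose k) ^ 2 * (2 ^ (n - 2 * k - 1) / n) ^ 2 := by
        gcongr
        exact mul_mul_mul_le_sq hlin hchoose (by positivity)
    _ = fanIKLc n k ^ 2 := by
        unfold fanIKLc
        ring

theorem stmt1 (n : ℕ) (hn : 1 ≤ n) :
    (∀ k, k ≤ (n - 1) / 2 → 0 < fanIKLc n k) ∧
    (∀ k, 1 ≤ k → k + 1 ≤ (n - 1) / 2 →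
      fanIKLc n (k - 1) * fanIKLc n (k + 1) ≤ fanIKLc n k ^ 2) :=
  ⟨fun _ hk ↦ fanIKLc_pos (by omega), fun _ hk hkn ↦ fanIKLc_mul_le_sq hk (by omega)⟩
end

section
/- For every positive integer n, the polynomial g_n(x) = Σ_{k=0}^{s} (n-2k)·binom(s,k)·binom(n,k)·x^k, where s = ⌊(n-1)/2⌋, has only real roots. -/
/-!
Let `P(x) = ∑_{k ≤ s} C(n,k) C(s,k) x^k`. By the Leibniz rule,
`s! · x^n P(1 + 1/x) = (d/dx)^s ((x + 1)^s x^n)`, which is real-rooted because differentiation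
preserves real-rootedness (Rolle), so `P` is real-rooted; having positive coefficients, all its
roots are negative, hence `F(x) = P(-x²)` is real-rooted as well. Now `g = n P - 2 x P'` satisfies
`g(-x²) = n F - x F'`, and the operator `n - x d/dx` is conjugate to `x d/dx` under
`f ↦ x^n f(1/x)` (here `deg F ≤ 2s ≤ n`), so it preserves real-rootedness. Finally `g(-x²)`
real-rooted forces `g` real-rooted.
-/

open Polynomial Finset Nat

namespace Polynomial

theorem Splits.derivative {f : ℝ[X]} (hf : f.Splits) : f.derivative.Splits := by
  rcases Nat.eq_zero_or_pos f.natDegree with h0 | hpos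
  · simp [derivative_of_natDegree_zero h0]
  rw [splits_iff_card_roots] at hf ⊢
  have hroots := card_roots_le_derivative f
  have hdeg := natDegree_eq_of_degree_eq_some (degree_derivative hpos.ne')
  have hle := f.derivative.card_roots'
  omega

theorem Splits.iterate_derivative {f : ℝ[X]} (hf : f.Splits) (k : ℕ) :
    (Polynomial.derivative^[k] f).Splits := by
  induction k with
  | zero => exact hf
  | succ k ih => rw [Function.iterate_succ_apply']; exact ih.derivative

theorem Splits.reverse {R : Type*} [DivisionSemiring R] {f : R[X]} (hf : f.Splits) :
    f.reverse.Splits := by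
  refine Submonoid.closure_induction ?_ (by rw [← C_1, reverse_C]; exact Splits.C 1)
    (fun f g _ _ hf hg ↦ reverse_mul_of_domain f g ▸ hf.mul hg) hf
  rintro f (⟨a, rfl⟩ | ⟨a, rfl⟩) <;>
    refine .of_natDegree_le_one ((reverse_natDegree_le _).trans ?_)
  · simp
  · exact natDegree_add_le_of_degree_le natDegree_X_le (by simp)

theorem reflect_eq_reverse_mul_X_pow {R : Type*} [Semiring R] {f : R[X]} {N : ℕ}
    (hf : f.natDegree ≤ N) : reflect N f = f.reverse * X ^ (N - f.natDegree) := by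
  have := reflect_mul f 1 le_rfl (natDegree_one.trans_le (Nat.zero_le (N - f.natDegree)))
  rwa [mul_one, Nat.add_sub_cancel' hf, reflect_one] at this

theorem Splits.reflect {R : Type*} [DivisionSemiring R] {f : R[X]} (hf : f.Splits) {N : ℕ}
    (hN : f.natDegree ≤ N) : (reflect N f).Splits := by
  rw [reflect_eq_reverse_mul_X_pow hN]
  exact hf.reverse.mul (Splits.X_pow _)

theorem Splits.of_comp {K : Type*} [Field K] {f g : K[X]} (hg : g.natDegree ≠ 0)
    (h : (f.comp g).Splits) : f.Splits := by
  have hg' : g ≠ C (g.coeff 0) := fun hC ↦ hg (by rw [hC, natDegree_C])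
  induction f using WfDvdMonoid.induction_on_irreducible with
  | zero => exact Splits.zero
  | unit u hu => exact hu.splits
  | mul a p ha hp ih =>
    have hpa : (p * a).comp g ≠ 0 := by
      simp [comp_eq_zero_iff, hg', ha, hp.ne_zero]
    rw [mul_comp] at h hpa
    refine Splits.mul ?_ (ih (h.of_dvd hpa (dvd_mul_left _ _)))
    obtain ⟨w, hw⟩ := (h.of_dvd hpa (dvd_mul_right _ _)).exists_eval_eq_zero <| by
      rw [degree_eq_natDegree (by simpa [comp_eq_zero_iff, hg'] using hp.ne_zero), natDegree_comp]
      exact_mod_cast (Nat.mul_pos hp.natDegree_pos (Nat.pos_of_ne_zero hg)).ne'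
    rw [eval_comp] at hw
    exact Splits.of_degree_eq_one (degree_eq_one_of_irreducible_of_root hp hw)

theorem Splits.comp_neg_X_sq {f : ℝ[X]} (hf : f.Splits)
    (hpos : ∀ x, 0 ≤ x → f.eval x ≠ 0) : (f.comp (-X ^ 2)).Splits := by
  rw [hf.eq_prod_roots, mul_comp, C_comp, multiset_prod_comp, Multiset.map_map]
  refine (Splits.multisetProd fun p hp ↦ ?_).C_mul _
  obtain ⟨r, hr, rfl⟩ := Multiset.mem_map.mp hp
  have hneg : r < 0 := not_le.mp fun h ↦ hpos r h (isRoot_of_mem_roots hr)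
  refine Splits.of_natDegree_eq_two (x := √(-r)) ?_ ?_
  · simp [sub_comp, natDegree_sub_C]
  · simp [Real.sq_sqrt (neg_nonneg.mpr hneg.le)]

theorem coeff_X_mul_derivative {R : Type*} [Semiring R] (f : R[X]) (i : ℕ) :
    (X * f.derivative).coeff i = i * f.coeff i := by
  cases i with
  | zero => simp
  | succ i => rw [coeff_X_mul, coeff_derivative, ← Nat.cast_succ, Nat.cast_comm]

theorem natDegree_X_mul_derivative_le {R : Type*} [Semiring R] (f : R[X]) :
    (X * f.derivative).natDegree ≤ f.natDegree :=
  natDegree_le_iff_coeff_eq_zero.mpr fun i hi ↦ by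
    rw [coeff_X_mul_derivative, coeff_eq_zero_of_natDegree_lt hi, mul_zero]

theorem reflect_X_mul_derivative_reflect {R : Type*} [CommRing R] {f : R[X]} {N : ℕ}
    (hf : f.natDegree ≤ N) :
    reflect N (X * (reflect N f).derivative) = C (N : R) * f - X * f.derivative := by
  ext i
  rw [coeff_reflect, coeff_X_mul_derivative, coeff_reflect, revAt_invol, coeff_sub, coeff_C_mul,
    coeff_X_mul_derivative, ← sub_mul]
  rcases le_or_gt i N with hi | hi
  · rw [revAt_le hi, Nat.cast_sub hi]
  · rw [coeff_eq_zero_of_natDegree_lt (hf.trans_lt hi), mul_zero, mul_zero]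

theorem Splits.C_mul_sub_X_mul_derivative {f : ℝ[X]} (hf : f.Splits) {N : ℕ}
    (hN : f.natDegree ≤ N) : (C (N : ℝ) * f - X * f.derivative).Splits := by
  rw [← reflect_X_mul_derivative_reflect hN]
  refine (Splits.X.mul (hf.reflect hN).derivative).reflect ?_
  exact (natDegree_X_mul_derivative_le _).trans (natDegree_reflect_le.trans (max_le le_rfl hN))

theorem X_mul_derivative_comp_neg_X_sq {R : Type*} [CommRing R] (p : R[X]) :
    X * (p.comp (-X ^ 2)).derivative = (C 2 * (X * p.derivative)).comp (-X ^ 2) := by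
  rw [derivative_comp, mul_comp, mul_comp, C_comp, X_comp, derivative_neg, derivative_X_pow]
  simp only [map_ofNat, Nat.cast_ofNat]
  ring

theorem reflect_sum {R ι : Type*} [Semiring R] (N : ℕ) (t : Finset ι) (f : ι → R[X]) :
    reflect N (∑ i ∈ t, f i) = ∑ i ∈ t, reflect N (f i) := by
  ext m
  simp only [coeff_reflect, finsetSum_coeff]

theorem reverse_X_add_one_pow {R : Type*} [Semiring R] [Nontrivial R] (k : ℕ) :
    ((X + 1 : R[X]) ^ k).reverse = (X + 1) ^ k := by
  ext i
  have hdeg : ((X + 1 : R[X]) ^ k).natDegree = k := by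
    rw [← C_1, natDegree_pow_X_add_C]
  rw [coeff_reverse, hdeg, coeff_X_add_one_pow, coeff_X_add_one_pow]
  rcases le_or_gt i k with hi | hi
  · rw [revAt_le hi, choose_symm hi]
  · rw [revAt_eq_self_of_lt hi]

theorem reflect_X_add_one_pow {R : Type*} [Semiring R] [Nontrivial R] {k N : ℕ} (hk : k ≤ N) :
    reflect N ((X + 1 : R[X]) ^ k) = (X + 1) ^ k * X ^ (N - k) := by
  have hdeg : ((X + 1 : R[X]) ^ k).natDegree = k := by
    rw [← C_1, natDegree_pow_X_add_C]
  rw [reflect_eq_reverse_mul_X_pow (hdeg.trans_le hk), reverse_X_add_one_pow, hdeg]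

theorem iterate_derivative_X_add_one_pow_mul_X_pow {R : Type*} [CommRing R] (s n : ℕ) :
    derivative^[s] ((X + 1 : R[X]) ^ s * X ^ n) = C (s ! : R) *
      ∑ k ∈ range (s + 1), C ((n.choose k : R) * s.choose k) * ((X + 1) ^ k * X ^ (n - k)) := by
  rw [iterate_derivative_mul, mul_sum]
  refine sum_congr rfl fun k hk ↦ ?_
  have hks : k ≤ s := Nat.lt_succ_iff.mp (mem_range.mp hk)
  have hcoeff : s.choose k * s.descFactorial (s - k) * n.descFactorial k =
      s ! * (n.choose k * s.choose k) := by
    rw [Nat.descFactorial_eq_factorial_mul_choose, Nat.descFactorial_eq_factorial_mul_choose,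
      choose_symm hks, ← choose_mul_factorial_mul_factorial hks]
    ring
  have hcoeff' := congrArg (Nat.cast : ℕ → R[X]) hcoeff
  push_cast at hcoeff'
  rw [← C_1, iterate_derivative_X_add_pow, iterate_derivative_X_pow_eq_smul, C_1,
    Nat.sub_sub_self hks]
  simp only [nsmul_eq_mul, smul_eq_C_mul, map_mul, map_natCast]
  linear_combination ((X + 1) ^ k * X ^ (n - k) : R[X]) * hcoeff'

end Polynomial

noncomputable def chooseMulChoosePoly (n s : ℕ) : ℝ[X] :=
  ∑ k ∈ range (s + 1), C ((n.choose k : ℝ) * s.choose k) * X ^ k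

theorem natDegree_chooseMulChoosePoly_le (n s : ℕ) : (chooseMulChoosePoly n s).natDegree ≤ s :=
  natDegree_sum_le_of_forall_le _ _ fun _ hk ↦
    (natDegree_C_mul_X_pow_le _ _).trans (Nat.lt_succ_iff.mp (mem_range.mp hk))

theorem chooseMulChoosePoly_eval_pos (n s : ℕ) {x : ℝ} (hx : 0 ≤ x) :
    0 < (chooseMulChoosePoly n s).eval x := by
  rw [chooseMulChoosePoly, eval_finsetSum]
  refine sum_pos' (fun k _ ↦ by simp only [eval_C_mul, eval_X_pow]; positivity)
    ⟨0, mem_range.mpr s.succ_pos, by simp⟩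

theorem iterate_derivative_eq_C_mul_reflect_chooseMulChoosePoly_comp {n s : ℕ} (hs : s ≤ n) :
    derivative^[s] ((X + 1 : ℝ[X]) ^ s * X ^ n) =
      C (s ! : ℝ) * reflect n ((chooseMulChoosePoly n s).comp (X + 1)) := by
  rw [iterate_derivative_X_add_one_pow_mul_X_pow, chooseMulChoosePoly, Polynomial.sum_comp,
    reflect_sum]
  congr 1
  refine sum_congr rfl fun k hk ↦ ?_
  rw [mul_comp, C_comp, X_pow_comp, reflect_C_mul,
    reflect_X_add_one_pow ((Nat.lt_succ_iff.mp (mem_range.mp hk)).trans hs)]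

theorem chooseMulChoosePoly_splits {n s : ℕ} (hs : s ≤ n) :
    (chooseMulChoosePoly n s).Splits := by
  have hprod : ((X + 1 : ℝ[X]) ^ s * X ^ n).Splits :=
    ((Splits.X_add_C 1).pow s).mul (Splits.X_pow n)
  have hder := hprod.iterate_derivative s
  rw [iterate_derivative_eq_C_mul_reflect_chooseMulChoosePoly_comp hs,
    splits_mul_iff_right (C_ne_zero.mpr (by positivity)) (Splits.C _)] at hder
  have hX : (X + 1 : ℝ[X]).natDegree = 1 := by rw [← C_1, natDegree_X_add_C]
  have hdeg : ((chooseMulChoosePoly n s).comp (X + 1)).natDegree ≤ n := by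
    rw [natDegree_comp, hX, mul_one]
    exact (natDegree_chooseMulChoosePoly_le n s).trans hs
  have hcomp := hder.reflect (natDegree_reflect_le.trans (max_le le_rfl hdeg))
  rw [reflect_reflect] at hcomp
  exact (splits_iff_comp_splits_of_natDegree_eq_one hX).mpr hcomp

theorem C_mul_sub_C_two_mul_X_mul_derivative_chooseMulChoosePoly (n s : ℕ) :
    C (n : ℝ) * chooseMulChoosePoly n s - C 2 * (X * (chooseMulChoosePoly n s).derivative) =
      ∑ k ∈ range (s + 1), C (((n : ℝ) - 2 * k) * s.choose k * n.choose k) * X ^ k := by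
  ext i
  simp only [coeff_sub, coeff_C_mul, coeff_X_mul_derivative, chooseMulChoosePoly, finsetSum_coeff,
    coeff_X_pow, mul_sum, ← sum_sub_distrib]
  refine sum_congr rfl fun k _ ↦ ?_
  split_ifs with h
  · subst h; ring
  · simp

theorem stmt6_general (n : ℕ) :
    (∑ k ∈ Finset.range ((n - 1) / 2 + 1),
        Polynomial.C (((n : ℝ) - 2 * k) * ((n - 1) / 2).choose k * n.choose k) *
          Polynomial.X ^ k).Splits := by
  set s := (n - 1) / 2
  have hs : 2 * s ≤ n := by omega
  set P := chooseMulChoosePoly n s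
  have hP : (P.comp (-X ^ 2)).Splits :=
    (chooseMulChoosePoly_splits (by omega)).comp_neg_X_sq
      fun x hx ↦ (chooseMulChoosePoly_eval_pos n s hx).ne'
  have hdeg : (P.comp (-X ^ 2)).natDegree ≤ n := by
    rw [natDegree_comp, natDegree_neg, natDegree_X_pow]
    nlinarith [natDegree_chooseMulChoosePoly_le n s]
  have hG := hP.C_mul_sub_X_mul_derivative hdeg
  rw [X_mul_derivative_comp_neg_X_sq, ← C_comp, ← mul_comp, ← sub_comp,
    C_mul_sub_C_two_mul_X_mul_derivative_chooseMulChoosePoly] at hG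
  exact hG.of_comp (by rw [natDegree_neg, natDegree_X_pow]; norm_num)

theorem stmt6 (n : ℕ) (hn : 1 ≤ n) :
    (∑ k ∈ Finset.range ((n - 1) / 2 + 1),
        Polynomial.C (((n : ℝ) - 2 * k) * ((n - 1) / 2).choose k * n.choose k) *
          Polynomial.X ^ k).Splits :=
  stmt6_general n
end

section
/- Define Y_n(t) ∈ ℚ[t] by Y_0(t) = 1, Y_1(t) = t+1, and for n ≥ 2, Y_n(t) = 2(t+1)·Y_{n-1}(t) - Σ_{j=0}^{⌊(n-2)/2⌋} C_j·t^{j+1}·Y_{n-2j-2}(t), where C_j is the j-th Catalan number. Then for every n ≥ 0, Y_n(t) is palindromic of degree n, i.e., t^n·Y_n(1/t) = Y_n(t). -/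
open Polynomial Finset

private lemma reflect_shift (p : Polynomial ℚ) (d k : ℕ) (hd : p.natDegree ≤ d) :
    p.reflect (k + d) = Polynomial.X ^ k * p.reflect d := by
  have h := Polynomial.reflect_mul (1 : Polynomial ℚ) p (F := k) (G := d)
    (by simp) hd
  simpa [Polynomial.reflect_one] using h

private lemma reflect_sub' (p q : Polynomial ℚ) (N : ℕ) :
    (p - q).reflect N = p.reflect N - q.reflect N := by
  ext i
  simp [Polynomial.coeff_reflect]

private lemma reflect_sum' {α : Type*} (s : Finset α) (f : α → Polynomial ℚ) (N : ℕ) :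
    (∑ j ∈ s, f j).reflect N = ∑ j ∈ s, (f j).reflect N := by
  ext i
  simp [Polynomial.coeff_reflect, Polynomial.finset_sum_coeff]

theorem stmt11 (Y : ℕ → Polynomial ℚ)
    (h0 : Y 0 = 1) (h1 : Y 1 = Polynomial.X + 1)
    (hrec : ∀ n, 2 ≤ n →
      Y n = 2 * (Polynomial.X + 1) * Y (n - 1) -
        ∑ j ∈ Finset.range ((n - 2) / 2 + 1),
          (catalan j : Polynomial ℚ) * Polynomial.X ^ (j + 1) * Y (n - 2 * j - 2)) :
    ∀ n : ℕ, (Y n).natDegree = n ∧ (Y n).reflect n = Y n := by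
  intro n
  induction n using Nat.strong_induction_on with
  | _ n ih =>
    match n with
    | 0 =>
      constructor
      · simp [h0]
      · rw [h0]; rw [Polynomial.reflect_one]; simp
    | 1 =>
      constructor
      · rw [h1]
        compute_degree!
      · rw [h1, Polynomial.reflect_add]
        rw [show (X : Polynomial ℚ) = X ^ 1 by ring, Polynomial.reflect_monomial,
          Polynomial.reflect_one]
        simp [Polynomial.revAt_le]
        ring
    | (m + 2) =>
      have hr := hrec (m + 2) (by omega)
      simp only [Nat.add_sub_cancel] at hr
      have hm1 : m + 2 - 1 = m + 1 := by omega
      rw [hm1] at hr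
      -- facts about Y (m+1)
      obtain ⟨hd1, hp1⟩ := ih (m + 1) (by omega)
      have hY1ne : Y (m + 1) ≠ 0 := by
        intro h; rw [h] at hd1; simp at hd1
      -- the leading product
      have h2X1 : (2 * (X + 1) : Polynomial ℚ).natDegree = 1 := by compute_degree!
      have h2X1ne : (2 * (X + 1) : Polynomial ℚ) ≠ 0 := by
        intro h
        rw [h] at h2X1; simp at h2X1
      have hdegP : (2 * (X + 1) * Y (m + 1) : Polynomial ℚ).natDegree = m + 2 := by
        rw [Polynomial.natDegree_mul h2X1ne hY1ne, h2X1, hd1]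
        omega
      -- degree bound on each summand
      have hterm : ∀ j ∈ Finset.range (m / 2 + 1),
          ((catalan j : Polynomial ℚ) * X ^ (j + 1) * Y (m + 2 - 2 * j - 2)).natDegree
            ≤ m + 1 := by
        intro j hj
        simp only [Finset.mem_range] at hj
        have h2j : 2 * j ≤ m := by omega
        have hdj := (ih (m + 2 - 2 * j - 2) (by omega)).1
        calc ((catalan j : Polynomial ℚ) * X ^ (j + 1) * Y (m + 2 - 2 * j - 2)).natDegree
            ≤ ((catalan j : Polynomial ℚ) * X ^ (j + 1)).natDegree
              + (Y (m + 2 - 2 * j - 2)).natDegree := Polynomial.natDegree_mul_le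
          _ ≤ ((catalan j : Polynomial ℚ)).natDegree + (X ^ (j + 1) : Polynomial ℚ).natDegree
              + (Y (m + 2 - 2 * j - 2)).natDegree := by
                gcongr; exact Polynomial.natDegree_mul_le
          _ ≤ 0 + (j + 1) + (m + 2 - 2 * j - 2) := by
                rw [hdj]
                gcongr
                · simp [Polynomial.natDegree_natCast]
                · simp
          _ ≤ m + 1 := by omega
      have hdegS : (∑ j ∈ Finset.range (m / 2 + 1),
          (catalan j : Polynomial ℚ) * X ^ (j + 1) * Y (m + 2 - 2 * j - 2)).natDegree
            ≤ m + 1 := by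
        exact Polynomial.natDegree_sum_le_of_forall_le _ _ hterm
      constructor
      · rw [hr]
        have hlt : (∑ j ∈ Finset.range (m / 2 + 1),
            (catalan j : Polynomial ℚ) * X ^ (j + 1) * Y (m + 2 - 2 * j - 2)).natDegree
            < (2 * (X + 1) * Y (m + 1) : Polynomial ℚ).natDegree := by
          rw [hdegP]; omega
        rw [Polynomial.natDegree_sub_eq_left_of_natDegree_lt hlt]
        exact hdegP
      · rw [hr, reflect_sub', reflect_sum']
        have hP : (2 * (X + 1) * Y (m + 1) : Polynomial ℚ).reflect (m + 2)
            = 2 * (X + 1) * Y (m + 1) := by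
          have := Polynomial.reflect_mul (2 * (X + 1) : Polynomial ℚ) (Y (m + 1))
            (F := 1) (G := m + 1) (le_of_eq h2X1) (le_of_eq hd1)
          rw [show 1 + (m + 1) = m + 2 by omega] at this
          rw [this, hp1]
          congr 1
          have hC2 : (Polynomial.C (2:ℚ)) = 2 := by norm_cast
          have : (2 * (X + 1) : Polynomial ℚ) = Polynomial.C 2 * (X ^ 1) + Polynomial.C 2 * X ^ 0 := by
            rw [hC2]; ring
          rw [this, Polynomial.reflect_add, Polynomial.reflect_C_mul_X_pow,
            Polynomial.reflect_C_mul_X_pow]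
          simp only [Polynomial.revAt_le, hC2, pow_zero, pow_one, mul_one,
            Nat.le_refl, Nat.zero_le, Nat.sub_zero, Nat.sub_self]
          ring
        rw [hP]
        congr 1
        apply Finset.sum_congr rfl
        intro j hj
        simp only [Finset.mem_range] at hj
        have h2j : 2 * j ≤ m := by omega
        obtain ⟨hdj, hpj⟩ := ih (m + 2 - 2 * j - 2) (by omega)
        have hcX : ((catalan j : Polynomial ℚ) * X ^ (j + 1)).natDegree ≤ j + 1 := by
          calc ((catalan j : Polynomial ℚ) * X ^ (j + 1)).natDegree
              ≤ ((catalan j : Polynomial ℚ)).natDegree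
                + (X ^ (j + 1) : Polynomial ℚ).natDegree := Polynomial.natDegree_mul_le
            _ ≤ 0 + (j + 1) := by gcongr <;> simp [Polynomial.natDegree_natCast]
            _ = j + 1 := by omega
        have hsplit := Polynomial.reflect_mul
          ((catalan j : Polynomial ℚ) * X ^ (j + 1)) (Y (m + 2 - 2 * j - 2))
          (F := j + 1) (G := m + 1 - j)
          hcX (by rw [hdj]; omega)
        rw [show (j + 1) + (m + 1 - j) = m + 2 by omega] at hsplit
        rw [hsplit]
        have hshift := reflect_shift (Y (m + 2 - 2 * j - 2)) (m + 2 - 2 * j - 2) (j + 1)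
          (le_of_eq hdj)
        rw [show (j + 1) + (m + 2 - 2 * j - 2) = m + 1 - j by omega] at hshift
        rw [hshift, hpj]
        have : ((catalan j : Polynomial ℚ) * X ^ (j + 1)).reflect (j + 1)
            = (catalan j : Polynomial ℚ) := by
          rw [show ((catalan j : Polynomial ℚ)) = Polynomial.C (catalan j : ℚ) by simp]
          rw [Polynomial.reflect_C_mul_X_pow]
          simp [Polynomial.revAt_le]
        rw [this]
        ring
end
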